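/- arXiv:2507.06529 — 4 statements merged into one kernel-verified Lean document; each statement's English description precedes it below -/
import Mathlib

section
/- Let X be a nonempty set, f : X → ℝ, and UCB, LCB : X → ℝ with LCB(x) ≤ f(x) ≤ UCB(x) for every x ∈ X, LCB bounded above, and suppose f attains its maximum at some x* ∈ X. Then the supremum of f restricted to the region of interest ROI = {x ∈ X : UCB(x) ≥ sup_{x' ∈ X} LCB(x')} equals the supremum of f over all of X; i.e., constraining the search to the ROI does not exclude the global optimum value. -/
/-- With valid confidence bounds `LCB ≤ f ≤ UCB`, `LCB` bounded
above, and `f` attaining its maximum at `x*`, the supremum of `f` restricted to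
the region of interest `ROI = {x | UCB x ≥ ⨆ x', LCB x'}` equals the supremum
of `f` over all of `X`. -/
theorem roi_sup_eq_global_sup {X : Type*} [Nonempty X]
    (f UCB LCB : X → ℝ)
    (hvalid : ∀ x, LCB x ≤ f x ∧ f x ≤ UCB x)
    (hbdd : BddAbove (Set.range LCB))
    (xstar : X) (hmax : ∀ x', f x' ≤ f xstar) :
    (⨆ x : {x : X // UCB x ≥ ⨆ x', LCB x'}, f x) = ⨆ x : X, f x := by
  have hstar : UCB xstar ≥ ⨆ x', LCB x' := by
    apply ciSup_le
    intro x'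
    exact le_trans ((hvalid x').1) (le_trans (hmax x') (hvalid xstar).2)
  have hX : (⨆ x : X, f x) = f xstar :=
    le_antisymm (ciSup_le hmax) (le_ciSup ⟨f xstar, by rintro y ⟨x, rfl⟩; exact hmax x⟩ xstar)
  have hR : (⨆ x : {x : X // UCB x ≥ ⨆ x', LCB x'}, f x) = f xstar := by
    haveI : Nonempty {x : X // UCB x ≥ ⨆ x', LCB x'} := ⟨⟨xstar, hstar⟩⟩
    refine le_antisymm (ciSup_le fun x => hmax x) ?_
    exact le_ciSup (f := fun x : {x : X // UCB x ≥ ⨆ x', LCB x'} => f x)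
      ⟨f xstar, by rintro y ⟨x, rfl⟩; exact hmax x⟩ ⟨xstar, hstar⟩
  rw [hR, hX]
end

section
/- Let μ, b ∈ ℝ and σ > 0, and let N(μ, σ²) denote the Gaussian measure on ℝ with mean μ and variance σ². Then ∫ max(0, x − b) dN(μ, σ²)(x) = (μ − b) · Φ((μ − b)/σ) + σ · φ((μ − b)/σ), where φ(z) = (1/√(2π)) exp(−z²/2) is the standard normal density and Φ(z) = ∫_{−∞}^{z} φ(u) du is the standard normal cumulative distribution function. -/
open ProbabilityTheory MeasureTheory Real

/-- The standard normal density `φ(z) = (1/√(2π)) exp(−z²/2)`. -/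
noncomputable def stdNormalPDF (z : ℝ) : ℝ :=
  (Real.sqrt (2 * Real.pi))⁻¹ * Real.exp (-z ^ 2 / 2)

/-- The standard normal CDF `Φ(z) = ∫_{−∞}^z φ(u) du`. -/
noncomputable def stdNormalCDF (z : ℝ) : ℝ :=
  ∫ u in Set.Iic z, stdNormalPDF u

/-!
Writing `X = σ Z + μ` with `Z` standard normal and `c = (μ - b) / σ`, we get
`max 0 (X - b) = σ · max 0 (Z + c)`, so it suffices to show `E[max 0 (Z + c)] = c Φ(c) + φ(c)`.
This expectation is `∫_{-c}^∞ (z + c) φ(z) dz`; the `c`-part is `c Φ(c)` by the symmetry of `φ`,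
and the `z`-part is `φ(-c) = φ(c)` because `-φ` is an antiderivative of `z φ(z)`.
-/

open Filter Set Topology

lemma stdNormalPDF_eq_gaussianPDFReal : stdNormalPDF = gaussianPDFReal 0 1 := by
  ext x
  simp [stdNormalPDF, gaussianPDFReal]

lemma stdNormalPDF_neg (x : ℝ) : stdNormalPDF (-x) = stdNormalPDF x := by
  simp [stdNormalPDF]

lemma integrable_stdNormalPDF : Integrable stdNormalPDF := by
  rw [stdNormalPDF_eq_gaussianPDFReal]
  exact integrable_gaussianPDFReal 0 1

lemma integrable_mul_stdNormalPDF : Integrable fun x ↦ x * stdNormalPDF x := by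
  refine ((integrable_mul_exp_neg_mul_sq one_half_pos).const_mul
    (√(2 * π))⁻¹).congr (ae_of_all _ fun x ↦ ?_)
  simp only [stdNormalPDF]
  ring_nf

lemma hasDerivAt_stdNormalPDF (x : ℝ) :
    HasDerivAt stdNormalPDF (-(x * stdNormalPDF x)) x := by
  have hexp : HasDerivAt (fun y : ℝ ↦ -y ^ 2 / 2) (-x) x := by
    refine ((hasDerivAt_pow 2 x).neg.div_const 2).congr_deriv ?_
    ring
  refine (hexp.exp.const_mul (√(2 * π))⁻¹).congr_deriv ?_
  unfold stdNormalPDF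
  ring

lemma tendsto_stdNormalPDF_atTop : Tendsto stdNormalPDF atTop (𝓝 0) := by
  have h : Tendsto (fun x : ℝ ↦ -x ^ 2 / 2) atTop atBot :=
    (tendsto_neg_atBot_iff.mpr (tendsto_pow_atTop two_ne_zero)).atBot_div_const two_pos
  have := (tendsto_exp_atBot.comp h).const_mul (√(2 * π))⁻¹
  rw [mul_zero] at this
  exact this

lemma integral_Ioi_mul_stdNormalPDF (a : ℝ) :
    ∫ x in Ioi a, x * stdNormalPDF x = stdNormalPDF a := by
  have := integral_Ioi_of_hasDerivAt_of_tendsto' (a := a)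
    (fun x _ ↦ (hasDerivAt_stdNormalPDF x).neg)
    (by simpa only [neg_neg] using integrable_mul_stdNormalPDF.integrableOn)
    tendsto_stdNormalPDF_atTop.neg
  simpa using this

lemma integral_Ioi_neg_stdNormalPDF (c : ℝ) :
    ∫ x in Ioi (-c), stdNormalPDF x = stdNormalCDF c := by
  rw [stdNormalCDF, ← integral_comp_neg_Iic]
  simp only [stdNormalPDF_neg]

lemma integral_max_zero_add_gaussianReal_zero_one (c : ℝ) :
    ∫ z, max 0 (z + c) ∂gaussianReal 0 1 = c * stdNormalCDF c + stdNormalPDF c := by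
  have hind : (fun z ↦ gaussianPDFReal 0 1 z • max 0 (z + c))
      = (Ioi (-c)).indicator fun z ↦ z * stdNormalPDF z + c * stdNormalPDF z := by
    ext z
    rw [← stdNormalPDF_eq_gaussianPDFReal, smul_eq_mul]
    by_cases hz : -c < z
    · rw [indicator_of_mem (mem_Ioi.mpr hz), max_eq_right (by linarith)]
      ring
    · rw [indicator_of_notMem (mt mem_Ioi.mp hz), max_eq_left (by linarith), mul_zero]
  rw [integral_gaussianReal_eq_integral_smul one_ne_zero, hind,
    integral_indicator measurableSet_Ioi, integral_add integrable_mul_stdNormalPDF.integrableOn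
      (integrable_stdNormalPDF.const_mul c).integrableOn, integral_const_mul,
    integral_Ioi_mul_stdNormalPDF, integral_Ioi_neg_stdNormalPDF, stdNormalPDF_neg]
  ring

lemma gaussianReal_eq_map_mul_add (μ σ : ℝ) :
    gaussianReal μ ⟨σ ^ 2, sq_nonneg σ⟩ = (gaussianReal 0 1).map fun z ↦ σ * z + μ := by
  calc gaussianReal μ ⟨σ ^ 2, sq_nonneg σ⟩
      = ((gaussianReal 0 1).map (σ * ·)).map (· + μ) := by
        rw [gaussianReal_map_const_mul, gaussianReal_map_add_const, mul_zero, zero_add, mul_one]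
        rfl
    _ = (gaussianReal 0 1).map fun z ↦ σ * z + μ :=
        Measure.map_map (measurable_add_const μ) (measurable_const_mul σ)

/-- Closed form of the expected improvement of a Gaussian
`N(μ, σ²)` (with `σ > 0`) over an incumbent `b`:
`E[max(0, X − b)] = (μ − b) Φ((μ − b)/σ) + σ φ((μ − b)/σ)`. -/
theorem expected_improvement_closed_form (μ b σ : ℝ) (hσ : 0 < σ) :
    ∫ x, max 0 (x - b) ∂(gaussianReal μ ⟨σ ^ 2, sq_nonneg σ⟩) =
      (μ - b) * stdNormalCDF ((μ - b) / σ) + σ * stdNormalPDF ((μ - b) / σ) := by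
  set c := (μ - b) / σ
  have hσc : σ * c = μ - b := mul_div_cancel₀ _ hσ.ne'
  have hfactor (z : ℝ) : max 0 (σ * z + μ - b) = σ * max 0 (z + c) := by
    rw [mul_max_of_nonneg _ _ hσ.le, mul_zero, mul_add, hσc, add_sub_assoc]
  rw [gaussianReal_eq_map_mul_add, integral_map (by fun_prop) (by fun_prop)]
  simp_rw [hfactor]
  rw [integral_const_mul, integral_max_zero_add_gaussianReal_zero_one, mul_add, ← mul_assoc, hσc]
end

section
/- Let μ, b ∈ ℝ and σ ≥ 0, and let N(μ, σ²) denote the Gaussian measure on ℝ with mean μ and variance σ². Then ∫ max(0, x − b) dN(μ, σ²)(x) ≤ max(0, μ − b) + σ / √(2π). -/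
/-!
Subadditivity of the positive part gives `(x - b)⁺ ≤ (μ - b)⁺ + (x - μ)⁺`, and for
`X ~ N(μ, σ²)` one has `E[(X - μ)⁺] = σ E[Z⁺]` with `Z` standard normal, where
`E[Z⁺] = (2π)^{-1/2} ∫₀^∞ z e^{-z²/2} dz = 1 / √(2π)`.
-/

open ProbabilityTheory MeasureTheory Real Set
open scoped NNReal

theorem integral_Ioi_mul_exp_neg_mul_sq {b : ℝ} (hb : 0 < b) :
    ∫ x in Ioi (0 : ℝ), x * exp (-b * x ^ 2) = (2 * b)⁻¹ := by
  have h := integral_rpow_mul_exp_neg_mul_rpow two_pos (by norm_num : (-1 : ℝ) < 1) hb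
  norm_num [rpow_neg_one] at h
  simp_rw [neg_mul, h]
  ring

theorem integral_posPart_mul_exp_neg_mul_sq {b : ℝ} (hb : 0 < b) :
    ∫ x, max 0 x * exp (-b * x ^ 2) = (2 * b)⁻¹ := by
  have hind : (fun x : ℝ => max 0 x * exp (-b * x ^ 2)) =
      (Ioi 0).indicator (fun x => x * exp (-b * x ^ 2)) := by
    ext x
    rcases le_or_gt x 0 with hx | hx
    · simp [hx, not_lt.2 hx]
    · simp [hx, hx.le]
  rw [hind, integral_indicator measurableSet_Ioi, integral_Ioi_mul_exp_neg_mul_sq hb]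

theorem integral_posPart_gaussianReal_zero_one :
    ∫ x, max 0 x ∂gaussianReal 0 1 = (√(2 * π))⁻¹ := by
  have hpdf (x : ℝ) : gaussianPDFReal 0 1 x • max 0 x =
      (√(2 * π))⁻¹ * (max 0 x * exp (-(1 / 2) * x ^ 2)) := by
    simp only [gaussianPDFReal, NNReal.coe_one, mul_one, sub_zero, smul_eq_mul]
    ring_nf
  simp_rw [integral_gaussianReal_eq_integral_smul one_ne_zero, hpdf]
  rw [integral_const_mul, integral_posPart_mul_exp_neg_mul_sq one_half_pos]
  norm_num

theorem gaussianReal_eq_map_gaussianReal_zero_one (μ : ℝ) (v : ℝ≥0) :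
    gaussianReal μ v = (gaussianReal 0 1).map (fun z => √v * z + μ) := by
  have hcomp : (fun z => √v * z + μ) = (· + μ) ∘ (√v * ·) := rfl
  rw [hcomp, ← Measure.map_map (measurable_add_const μ) (measurable_const_mul _),
    gaussianReal_map_const_mul, gaussianReal_map_add_const]
  congr 1
  · simp
  · ext; simp

theorem integral_posPart_sub_gaussianReal (μ : ℝ) (v : ℝ≥0) :
    ∫ x, max 0 (x - μ) ∂gaussianReal μ v = √v / √(2 * π) := by
  rw [gaussianReal_eq_map_gaussianReal_zero_one, integral_map (by fun_prop) (by fun_prop)]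
  have hscale (x : ℝ) : max 0 (√v * x) = √v * max 0 x := by
    rw [mul_max_of_nonneg _ _ (sqrt_nonneg _), mul_zero]
  simp_rw [add_sub_cancel_right, hscale]
  rw [integral_const_mul, integral_posPart_gaussianReal_zero_one, div_eq_mul_inv]

theorem integrable_posPart_sub_gaussianReal (c μ : ℝ) (v : ℝ≥0) :
    Integrable (fun x => max 0 (x - c)) (gaussianReal μ v) :=
  (integrable_const 0).sup (((memLp_id_gaussianReal 1).integrable le_rfl).sub (integrable_const c))

theorem integral_posPart_sub_gaussianReal_le (μ b : ℝ) (v : ℝ≥0) :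
    ∫ x, max 0 (x - b) ∂gaussianReal μ v ≤ max 0 (μ - b) + √v / √(2 * π) := by
  have hsplit (x : ℝ) : max 0 (x - b) ≤ max 0 (μ - b) + max 0 (x - μ) := by
    simpa using max_add_add_le_max_add_max (a := (0 : ℝ)) (b := 0) (c := μ - b) (d := x - μ)
  have hint := integrable_posPart_sub_gaussianReal μ μ v
  calc ∫ x, max 0 (x - b) ∂gaussianReal μ v
      ≤ ∫ x, (max 0 (μ - b) + max 0 (x - μ)) ∂gaussianReal μ v :=
        integral_mono (integrable_posPart_sub_gaussianReal b μ v) ((integrable_const _).add hint)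
          hsplit
    _ = max 0 (μ - b) + √v / √(2 * π) := by
        rw [integral_add (integrable_const _) hint, integral_const, probReal_univ, one_smul,
          integral_posPart_sub_gaussianReal]

/-- The expected improvement of a Gaussian `N(μ, σ²)` (`σ ≥ 0`)
over an incumbent `b` is at most `max(0, μ − b) + σ / √(2π)`. -/
theorem expected_improvement_upper_bound (μ b σ : ℝ) (hσ : 0 ≤ σ) :
    ∫ x, max 0 (x - b) ∂(gaussianReal μ ⟨σ ^ 2, sq_nonneg σ⟩) ≤
      max 0 (μ - b) + σ / Real.sqrt (2 * Real.pi) := by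
  convert integral_posPart_sub_gaussianReal_le μ b ⟨σ ^ 2, sq_nonneg σ⟩ using 3
  exact (sqrt_sq hσ).symm
end

section
/- Let X be a nonempty set, f : X → ℝ, μ, σ : X → ℝ with σ(x) ≥ 0 and f(x) ≤ μ(x) + β·σ(x) for all x ∈ X, where β ≥ 0. Let b ∈ ℝ and δ > 0, and suppose that for every x ∈ X the expected improvement satisfies ∫ max(0, y − b) dN(μ(x), σ(x)²)(y) < δ. If σ is bounded above, then sup_{x ∈ X} f(x) ≤ b + δ + β · sup_{x ∈ X} σ(x). (Soundness of the Bayesian early-stopping criterion: if expected improvement is below δ everywhere and the upper confidence bounds are valid, the remaining gap to the optimum is at most δ plus β times the maximal predictive standard deviation.) -/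
open ProbabilityTheory MeasureTheory

lemma integral_sub_le_integral_max_zero_sub {ν : Measure ℝ} [IsProbabilityMeasure ν]
    (hν : Integrable (fun y => y) ν) (b : ℝ) :
    (∫ y, y ∂ν) - b ≤ ∫ y, max 0 (y - b) ∂ν := by
  have hsub : Integrable (fun y => y - b) ν := hν.sub (integrable_const b)
  calc (∫ y, y ∂ν) - b = ∫ y, (y - b) ∂ν := by
        rw [integral_sub hν (integrable_const b), integral_const, probReal_univ, one_smul]
    _ ≤ ∫ y, max 0 (y - b) ∂ν :=
        integral_mono hsub ((integrable_const 0).sup hsub) fun y => le_max_right _ _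

lemma le_add_of_integral_max_zero_sub_gaussianReal_lt {m b δ : ℝ} {v : NNReal}
    (h : ∫ y, max 0 (y - b) ∂gaussianReal m v < δ) : m ≤ b + δ := by
  have hmean := integral_sub_le_integral_max_zero_sub
    ((memLp_id_gaussianReal (μ := m) (v := v) 1).integrable le_rfl) b
  rw [integral_id_gaussianReal] at hmean
  linarith

theorem bayesian_early_stop_sound_general
    {X : Type*} [Nonempty X] (f μ σ : X → ℝ) (β : ℝ) (hβ : 0 ≤ β)
    (hvalid : ∀ x, f x ≤ μ x + β * σ x)
    (b δ : ℝ)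
    (hEI : ∀ x, ∫ y, max 0 (y - b)
        ∂(gaussianReal (μ x) ⟨(σ x) ^ 2, sq_nonneg (σ x)⟩) < δ)
    (hσbdd : BddAbove (Set.range σ)) :
    (⨆ x, f x) ≤ b + δ + β * ⨆ x, σ x := by
  refine ciSup_le fun x => ?_
  calc f x ≤ μ x + β * σ x := hvalid x
    _ ≤ b + δ + β * ⨆ x, σ x :=
        add_le_add (le_add_of_integral_max_zero_sub_gaussianReal_lt (hEI x))
          (mul_le_mul_of_nonneg_left (le_ciSup hσbdd x) hβ)

/-- Soundness of Bayesian early stopping: if the upper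
confidence bounds are valid (`f x ≤ μ x + β σ x`, `β ≥ 0`, `σ ≥ 0`), `σ` is
bounded above, and the expected improvement over the incumbent `b` is below
`δ > 0` at every point, then `⨆ x, f x ≤ b + δ + β · ⨆ x, σ x`. -/
theorem bayesian_early_stop_sound
    {X : Type*} [Nonempty X] (f μ σ : X → ℝ) (β : ℝ) (hβ : 0 ≤ β)
    (hσnonneg : ∀ x, 0 ≤ σ x)
    (hvalid : ∀ x, f x ≤ μ x + β * σ x)
    (b δ : ℝ) (hδ : 0 < δ)
    (hEI : ∀ x, ∫ y, max 0 (y - b)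
        ∂(gaussianReal (μ x) ⟨(σ x) ^ 2, sq_nonneg (σ x)⟩) < δ)
    (hσbdd : BddAbove (Set.range σ)) :
    (⨆ x, f x) ≤ b + δ + β * ⨆ x, σ x :=
  bayesian_early_stop_sound_general f μ σ β hβ hvalid b δ hEI hσbdd
end
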